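/- With A_n and T_n(t) = e^{tA_n} as above, the family sup_{n≥2} ‖T_n(t) A_n^{-1}‖ is bounded above and below by positive constants uniformly in t ≥ 0: there exist 0 < m ≤ M such that m ≤ sup_{n≥2} ‖T_n(t) A_n^{-1}‖ ≤ M for all t ≥ 0. -/

import Mathlib

open Complex

noncomputable def battyA (n : ℕ) : Matrix (Fin 2) (Fin 2) ℂ :=
  !![(n : ℂ) * I + I / n, 1; 0, (n : ℂ) * I - I / n]

noncomputable def opNorm2 (M : Matrix (Fin 2) (Fin 2) ℂ) : ℝ :=
  ‖Matrix.toEuclideanCLM (𝕜 := ℂ) M‖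

/-!
The eigenvalues `a = i(n + 1/n)` and `b = i(n - 1/n)` of `A_n` are purely imaginary, so
`e^{tA_n}` has unimodular diagonal entries and off-diagonal entry `(e^{tb} - e^{ta}) / (b - a)`,
which has modulus at most `n` because `|b - a| = 2/n`. Since `‖A_n⁻¹‖ ≤ 3/n`, submultiplicativity
gives `‖T_n(t) A_n⁻¹‖ ≤ (n + 2) · 3/n ≤ 6`. From below, the `(2,2)` entry of `T_2(t) A_2⁻¹` is
`e^{tb}/b` with `|b| = 3/2`.
-/

lemma EuclideanSpace.norm_le_sum_norm_apply {𝕜 ι : Type*} [RCLike 𝕜] [Fintype ι]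
    (x : EuclideanSpace 𝕜 ι) : ‖x‖ ≤ ∑ i, ‖x i‖ := by
  conv_lhs => rw [← (EuclideanSpace.basisFun ι 𝕜).sum_repr x]
  refine (norm_sum_le _ _).trans_eq ?_
  simp [norm_smul]

namespace Matrix

section toEuclideanCLM

variable {𝕜 ι : Type*} [RCLike 𝕜] [Fintype ι] [DecidableEq ι]

lemma norm_apply_le_norm_toEuclideanCLM (A : Matrix ι ι 𝕜) (i j : ι) :
    ‖A i j‖ ≤ ‖toEuclideanCLM (𝕜 := 𝕜) A‖ := by
  have hcol : toEuclideanCLM (𝕜 := 𝕜) A (EuclideanSpace.single j 1) i = A i j := by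
    simp [EuclideanSpace.single, mulVec_single]
  calc ‖A i j‖ ≤ ‖toEuclideanCLM (𝕜 := 𝕜) A (EuclideanSpace.single j 1)‖ :=
        hcol ▸ PiLp.norm_apply_le _ i
    _ ≤ ‖toEuclideanCLM (𝕜 := 𝕜) A‖ := by
        simpa using (toEuclideanCLM (𝕜 := 𝕜) A).le_opNorm (EuclideanSpace.single j 1)

lemma norm_toEuclideanCLM_le_sum_norm_apply (A : Matrix ι ι 𝕜) :
    ‖toEuclideanCLM (𝕜 := 𝕜) A‖ ≤ ∑ i, ∑ j, ‖A i j‖ := by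
  refine ContinuousLinearMap.opNorm_le_bound _ (by positivity) fun x => ?_
  calc ‖toEuclideanCLM (𝕜 := 𝕜) A x‖ ≤ ∑ i, ‖∑ j, A i j * x j‖ := by
        refine (EuclideanSpace.norm_le_sum_norm_apply _).trans_eq ?_
        simp only [ofLp_toEuclideanCLM, mulVec, dotProduct]
    _ ≤ ∑ i, ∑ j, ‖A i j‖ * ‖x‖ := by
        gcongr with i
        refine (norm_sum_le _ _).trans (Finset.sum_le_sum fun j _ => ?_)
        rw [norm_mul]
        gcongr
        exact PiLp.norm_apply_le x j
    _ = (∑ i, ∑ j, ‖A i j‖) * ‖x‖ := by simp [Finset.sum_mul]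

end toEuclideanCLM

lemma inv_upperTriangular_fin_two {K : Type*} [Field K] {a b : K} (c : K) (ha : a ≠ 0)
    (hb : b ≠ 0) : !![a, c; 0, b]⁻¹ = !![a⁻¹, -c / (a * b); 0, b⁻¹] := by
  refine inv_eq_right_inv ?_
  ext i j
  fin_cases i <;> fin_cases j <;> simp <;> field_simp; ring

lemma exp_smul_upperTriangular_fin_two {a b : ℂ} (c t : ℂ) (hab : a ≠ b) :
    NormedSpace.exp (t • !![a, c; 0, b]) =
      !![cexp (t * a), c * (cexp (t * b) - cexp (t * a)) / (b - a); 0, cexp (t * b)] := by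
  have hba : b - a ≠ 0 := sub_ne_zero.mpr hab.symm
  set P : Matrix (Fin 2) (Fin 2) ℂ := !![1, c; 0, b - a]
  have hP : IsUnit P := by
    simpa [isUnit_iff_isUnit_det, P, det_fin_two_of] using hba
  have hPinv : P⁻¹ = !![1, -c / (b - a); 0, (b - a)⁻¹] := by
    simpa [P] using inv_upperTriangular_fin_two c one_ne_zero hba
  have hconj : t • !![a, c; 0, b] = P * diagonal ![t * a, t * b] * P⁻¹ := by
    rw [hPinv, diagonal_vec2, mul_fin_two, mul_fin_two]
    ext i j
    fin_cases i <;> fin_cases j <;> simp <;> field_simp; ring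
  rw [hconj, exp_conj _ _ hP, exp_diagonal, Pi.exp_def, diagonal_fin_two, hPinv,
    mul_fin_two, mul_fin_two]
  ext i j
  fin_cases i <;> fin_cases j <;> simp [← Complex.exp_eq_exp_ℂ] <;> field_simp; ring

end Matrix

open Matrix

lemma norm_cexp_ofReal_mul_of_re_eq_zero {a : ℂ} (ha : a.re = 0) (t : ℝ) :
    ‖cexp (t * a)‖ = 1 := by
  simp [Complex.norm_exp, ha]

lemma opNorm2_mul_le (A B : Matrix (Fin 2) (Fin 2) ℂ) :
    opNorm2 (A * B) ≤ opNorm2 A * opNorm2 B := by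
  simpa only [opNorm2, map_mul] using norm_mul_le _ _

lemma opNorm2_upperTriangular_le (a b c : ℂ) :
    opNorm2 !![a, c; 0, b] ≤ ‖a‖ + ‖c‖ + ‖b‖ := by
  refine (norm_toEuclideanCLM_le_sum_norm_apply _).trans_eq ?_
  simp [Fin.sum_univ_two, add_assoc]

lemma opNorm2_exp_smul_upperTriangular_le {a b : ℂ} (ha : a.re = 0) (hb : b.re = 0) (c : ℂ)
    (t : ℝ) (hab : a ≠ b) :
    opNorm2 (NormedSpace.exp ((t : ℂ) • !![a, c; 0, b])) ≤ 2 + 2 * ‖c‖ / ‖b - a‖ := by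
  rw [exp_smul_upperTriangular_fin_two c t hab]
  refine (opNorm2_upperTriangular_le _ _ _).trans ?_
  have hexp : ‖cexp (t * b) - cexp (t * a)‖ ≤ 2 := by
    refine (norm_sub_le _ _).trans ?_
    rw [norm_cexp_ofReal_mul_of_re_eq_zero ha, norm_cexp_ofReal_mul_of_re_eq_zero hb]
    norm_num
  rw [norm_cexp_ofReal_mul_of_re_eq_zero ha, norm_cexp_ofReal_mul_of_re_eq_zero hb, norm_div,
    norm_mul]
  calc 1 + ‖c‖ * ‖cexp (t * b) - cexp (t * a)‖ / ‖b - a‖ + 1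
      ≤ 1 + ‖c‖ * 2 / ‖b - a‖ + 1 := by gcongr
    _ = 2 + 2 * ‖c‖ / ‖b - a‖ := by ring

lemma inv_norm_le_opNorm2_exp_smul_upperTriangular_mul_inv {a b : ℂ} (hb : b.re = 0) (c : ℂ)
    (t : ℝ) (ha₀ : a ≠ 0) (hb₀ : b ≠ 0) (hab : a ≠ b) :
    ‖b‖⁻¹ ≤ opNorm2 (NormedSpace.exp ((t : ℂ) • !![a, c; 0, b]) * !![a, c; 0, b]⁻¹) := by
  have hentry : (NormedSpace.exp ((t : ℂ) • !![a, c; 0, b]) * !![a, c; 0, b]⁻¹) 1 1 =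
      cexp (t * b) * b⁻¹ := by
    rw [exp_smul_upperTriangular_fin_two c t hab, inv_upperTriangular_fin_two c ha₀ hb₀]
    simp [mul_apply, Fin.sum_univ_two]
  calc ‖b‖⁻¹ = ‖(NormedSpace.exp ((t : ℂ) • !![a, c; 0, b]) * !![a, c; 0, b]⁻¹) 1 1‖ := by
        rw [hentry, norm_mul, norm_cexp_ofReal_mul_of_re_eq_zero hb, norm_inv, one_mul]
    _ ≤ _ := norm_apply_le_norm_toEuclideanCLM _ 1 1

section battyA

variable {n : ℕ}

lemma battyA_eq : battyA n = !![(n : ℂ) * I + I / n, 1; 0, (n : ℂ) * I - I / n] := rfl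

lemma le_norm_battyA_zero_zero : (n : ℝ) ≤ ‖(n : ℂ) * I + I / n‖ := by
  have him : ((n : ℂ) * I + I / n).im = n + 1 / n := by simp
  have : (0 : ℝ) ≤ 1 / n := by positivity
  calc (n : ℝ) ≤ n + 1 / n := by linarith
    _ = |((n : ℂ) * I + I / n).im| := by rw [him, abs_of_nonneg (by positivity)]
    _ ≤ _ := abs_im_le_norm _

lemma le_norm_battyA_sub : 2 / (n : ℝ) ≤ ‖(n : ℂ) * I - I / n - ((n : ℂ) * I + I / n)‖ := by
  have him : ((n : ℂ) * I - I / n - ((n : ℂ) * I + I / n)).im = -(2 / n) := by simp; ring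
  calc 2 / (n : ℝ) = |((n : ℂ) * I - I / n - ((n : ℂ) * I + I / n)).im| := by
        rw [him, abs_neg, abs_of_nonneg (by positivity)]
    _ ≤ _ := abs_im_le_norm _

lemma le_norm_battyA_one_one (hn : 2 ≤ n) : 3 * (n : ℝ) / 4 ≤ ‖(n : ℂ) * I - I / n‖ := by
  have him : ((n : ℂ) * I - I / n).im = n - 1 / n := by simp
  have hn' : (2 : ℝ) ≤ n := by exact_mod_cast hn
  have hinv : 1 / (n : ℝ) ≤ n / 4 := by
    rw [div_le_div_iff₀ (by positivity) (by norm_num)]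
    nlinarith
  calc 3 * (n : ℝ) / 4 ≤ n - 1 / n := by linarith
    _ = |((n : ℂ) * I - I / n).im| := by rw [him, abs_of_nonneg (by linarith)]
    _ ≤ _ := abs_im_le_norm _

lemma opNorm2_exp_smul_battyA_le (hn : 0 < n) (t : ℝ) :
    opNorm2 (NormedSpace.exp ((t : ℂ) • battyA n)) ≤ 2 + n := by
  have hsub : 0 < ‖(n : ℂ) * I - I / n - ((n : ℂ) * I + I / n)‖ :=
    (by positivity : (0 : ℝ) < 2 / n).trans_le le_norm_battyA_sub
  have hne : (n : ℂ) * I + I / n ≠ (n : ℂ) * I - I / n :=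
    (sub_ne_zero.mp (norm_pos_iff.mp hsub)).symm
  refine (opNorm2_exp_smul_upperTriangular_le (by simp) (by simp) 1 t hne).trans ?_
  rw [norm_one, mul_one, add_le_add_iff_left, div_le_iff₀ hsub]
  calc (2 : ℝ) = n * (2 / n) := by field_simp
    _ ≤ n * _ := by gcongr; exact le_norm_battyA_sub

lemma opNorm2_battyA_inv_le (hn : 2 ≤ n) : opNorm2 (battyA n)⁻¹ ≤ 3 / n := by
  have hn0 : (2 : ℝ) ≤ n := by exact_mod_cast hn
  have ha := le_norm_battyA_zero_zero (n := n)
  have hb := le_norm_battyA_one_one hn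
  rw [battyA_eq, inv_upperTriangular_fin_two 1 (norm_pos_iff.mp (by linarith))
    (norm_pos_iff.mp (by linarith))]
  refine (opNorm2_upperTriangular_le _ _ _).trans ?_
  rw [norm_inv, norm_inv, norm_div, norm_neg, norm_one, norm_mul]
  calc ‖(n : ℂ) * I + I / n‖⁻¹ + 1 / (‖(n : ℂ) * I + I / n‖ * ‖(n : ℂ) * I - I / n‖) +
        ‖(n : ℂ) * I - I / n‖⁻¹
      ≤ (n : ℝ)⁻¹ + 1 / (n * (3 * n / 4)) + (3 * n / 4 : ℝ)⁻¹ := by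
        gcongr
    _ ≤ 3 / n := by
        field_simp
        nlinarith

lemma opNorm2_exp_smul_battyA_mul_inv_le (hn : 2 ≤ n) (t : ℝ) :
    opNorm2 (NormedSpace.exp ((t : ℂ) • battyA n) * (battyA n)⁻¹) ≤ 6 := by
  have hn0 : (2 : ℝ) ≤ n := by exact_mod_cast hn
  calc _ ≤ opNorm2 (NormedSpace.exp ((t : ℂ) • battyA n)) * opNorm2 (battyA n)⁻¹ :=
        opNorm2_mul_le _ _
    _ ≤ (2 + n) * (3 / n) :=
        mul_le_mul (opNorm2_exp_smul_battyA_le (by omega) t) (opNorm2_battyA_inv_le hn)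
          (norm_nonneg _) (by positivity)
    _ ≤ 6 := by
        rw [mul_div_assoc', div_le_iff₀ (by linarith)]
        linarith

end battyA

lemma two_thirds_le_opNorm2_exp_smul_battyA_two_mul_inv (t : ℝ) :
    2 / 3 ≤ opNorm2 (NormedSpace.exp ((t : ℂ) • battyA 2) * (battyA 2)⁻¹) := by
  have hb : ((2 : ℕ) : ℂ) * I - I / (2 : ℕ) = ((3 / 2 : ℝ) : ℂ) * I := by push_cast; ring
  have ha : ((2 : ℕ) : ℂ) * I + I / (2 : ℕ) = ((5 / 2 : ℝ) : ℂ) * I := by push_cast; ring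
  have hab : ((5 / 2 : ℝ) : ℂ) * I ≠ ((3 / 2 : ℝ) : ℂ) * I := by
    simp [Complex.ext_iff]
  rw [battyA_eq, ha, hb]
  convert inv_norm_le_opNorm2_exp_smul_upperTriangular_mul_inv (by simp) 1 t (by simp)
    (by simp) hab using 1
  simp

/-- `sup_{n ≥ 2} ‖T_n(t) A_n⁻¹‖` (with `T_n(t) = e^{tA_n}`) is bounded above and below by
positive constants, uniformly in `t ≥ 0`. -/
theorem sup_battyT_mul_inv_bounded :
    ∃ m M : ℝ, 0 < m ∧ m ≤ M ∧ ∀ t : ℝ, 0 ≤ t →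
      m ≤ (⨆ n : {k : ℕ // 2 ≤ k},
              opNorm2 (NormedSpace.exp ((t : ℂ) • battyA n) * (battyA n)⁻¹)) ∧
      (⨆ n : {k : ℕ // 2 ≤ k},
          opNorm2 (NormedSpace.exp ((t : ℂ) • battyA n) * (battyA n)⁻¹)) ≤ M := by
  refine ⟨2 / 3, 6, by norm_num, by norm_num, fun t _ => ?_⟩
  have : Nonempty {k : ℕ // 2 ≤ k} := ⟨⟨2, le_rfl⟩⟩
  have hle : ∀ n : {k : ℕ // 2 ≤ k},
      opNorm2 (NormedSpace.exp ((t : ℂ) • battyA n) * (battyA n)⁻¹) ≤ 6 :=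
    fun n => opNorm2_exp_smul_battyA_mul_inv_le n.2 t
  exact ⟨(two_thirds_le_opNorm2_exp_smul_battyA_two_mul_inv t).trans
    (le_ciSup ⟨6, Set.forall_mem_range.2 hle⟩ ⟨2, le_rfl⟩), ciSup_le hle⟩
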